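/- arXiv:2309.12162 — 5 statements merged into one kernel-verified Lean document; each statement's English description precedes it below -/
import Mathlib

section
/- Let a ∈ ℝ^K be a vector with strictly positive entries and A a K×K diagonal positive semidefinite matrix of rank r. Then the matrix aa' + A has rank equal to min(K, r+1). -/
open Matrix Module LinearMap

/-!
Since `d ≥ 0`, `xᵀ (a aᵀ + diag d) x = (a ⬝ᵥ x)² + ∑ dᵢ xᵢ²`, so `x` lies in the kernel of
`a aᵀ + diag d` iff `a ⬝ᵥ x = 0` and `x` vanishes on the support `S` of `d`. Hence the rank is that
of `x ↦ (a ⬝ᵥ x, x|_S)`. This map is injective when `S` is everything; otherwise some `k ∉ S` has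
`aₖ ≠ 0`, so `a ⬝ᵥ x` can be adjusted through `xₖ` alone and the map is onto a space of
dimension `|S| + 1`.
-/

theorem LinearMap.finrank_range_eq_of_ker_eq {R M N N' : Type*} [Ring R] [AddCommGroup M]
    [Module R M] [AddCommGroup N] [Module R N] [AddCommGroup N'] [Module R N']
    {f : M →ₗ[R] N} {g : M →ₗ[R] N'} (h : ker f = ker g) :
    finrank R (range f) = finrank R (range g) :=
  (f.quotKerEquivRange.symm.trans
    ((Submodule.quotEquivOfEq _ _ h).trans g.quotKerEquivRange)).finrank_eq

namespace Matrix

variable {n : Type*} [Fintype n]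

section CommRing

variable {R : Type*} [CommRing R]

theorem dotProduct_vecMulVec_add_diagonal_mulVec [DecidableEq n] (a d x : n → R) :
    x ⬝ᵥ (vecMulVec a a + diagonal d) *ᵥ x = (a ⬝ᵥ x) ^ 2 + ∑ i, d i * x i ^ 2 := by
  rw [add_mulVec, vecMulVec_mulVec, op_smul_eq_smul, dotProduct_add, dotProduct_smul, smul_eq_mul,
    dotProduct_comm x a, ← sq]
  congr 1
  exact Finset.sum_congr rfl fun i _ => by rw [mulVec_diagonal]; ring

theorem vecMulVec_add_diagonal_mulVec_eq_zero_iff [LinearOrder R] [IsStrictOrderedRing R]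
    [DecidableEq n] {a d : n → R} (hd : ∀ i, 0 ≤ d i) {x : n → R} :
    (vecMulVec a a + diagonal d) *ᵥ x = 0 ↔ a ⬝ᵥ x = 0 ∧ ∀ i, d i ≠ 0 → x i = 0 := by
  constructor
  · intro hx
    have hterm : ∀ i ∈ Finset.univ, 0 ≤ d i * x i ^ 2 := fun i _ =>
      mul_nonneg (hd i) (sq_nonneg _)
    have hquad := dotProduct_vecMulVec_add_diagonal_mulVec a d x
    rw [hx, dotProduct_zero, eq_comm,
      add_eq_zero_iff_of_nonneg (sq_nonneg _) (Finset.sum_nonneg hterm),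
      Finset.sum_eq_zero_iff_of_nonneg hterm] at hquad
    refine ⟨pow_eq_zero_iff two_ne_zero |>.mp hquad.1, fun i hi => ?_⟩
    simpa [hi] using hquad.2 i (Finset.mem_univ i)
  · rintro ⟨hdot, hsupp⟩
    ext i
    by_cases hi : d i = 0 <;>
      simp [add_mulVec, vecMulVec_mulVec, mulVec_diagonal, hdot, hi, hsupp]

abbrev dotProductProdRestrict (a : n → R) (p : n → Prop) :
    (n → R) →ₗ[R] R × ({i // p i} → R) :=
  (dotProductBilin R R a).prod (funLeft R R Subtype.val)

theorem ker_mulVecLin_vecMulVec_add_diagonal [LinearOrder R] [IsStrictOrderedRing R]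
    [DecidableEq n] (a : n → R) {d : n → R} (hd : ∀ i, 0 ≤ d i) :
    ker (vecMulVec a a + diagonal d).mulVecLin = ker (dotProductProdRestrict a (d · ≠ 0)) := by
  ext x
  rw [mem_ker, mem_ker, mulVecLin_apply, vecMulVec_add_diagonal_mulVec_eq_zero_iff hd]
  simp [funLeft, funext_iff]

end CommRing

variable {𝕜 : Type*} [Field 𝕜] (a : n → 𝕜) {p : n → Prop}

theorem finrank_range_dotProductProdRestrict_eq_card_add_one [DecidablePred p] {k : n}
    (hk : ¬p k) (ha : a k ≠ 0) :
    finrank 𝕜 (range (dotProductProdRestrict a p)) = Fintype.card {i // p i} + 1 := by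
  have hsurj : range (dotProductProdRestrict a p) = ⊤ := by
    rw [range_eq_top]
    rintro ⟨c, y⟩
    classical
    let x₀ : n → 𝕜 := fun i => if h : p i then y ⟨i, h⟩ else 0
    refine ⟨x₀ + ((c - a ⬝ᵥ x₀) / a k) • Pi.single k 1, Prod.ext ?_ (funext fun i => ?_)⟩
    · change a ⬝ᵥ (x₀ + _) = c
      rw [dotProduct_add, dotProduct_smul, dotProduct_single, mul_one, smul_eq_mul,
        div_mul_cancel₀ _ ha, add_sub_cancel]
    · have hik : (i : n) ≠ k := fun h => hk (h ▸ i.2)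
      simp [funLeft, x₀, i.2, Pi.single_eq_of_ne hik]
  rw [hsurj, finrank_top, finrank_prod, finrank_self, finrank_fintype_fun_eq_card, add_comm]

theorem finrank_range_dotProductProdRestrict_of_forall (hp : ∀ i, p i) :
    finrank 𝕜 (range (dotProductProdRestrict a p)) = Fintype.card n := by
  rw [finrank_range_of_inj, finrank_fintype_fun_eq_card]
  intro x y hxy
  funext i
  exact congrFun (congrArg Prod.snd hxy) ⟨i, hp i⟩

end Matrix

/-- For `a ∈ ℝ^K` with strictly positive entries and `A` a diagonal PSD matrix
with exactly `r` nonzero diagonal entries, the matrix `a aᵀ + A` has rank `min K (r+1)`. -/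
theorem rank_vecMulVec_add_diagonal {K : ℕ} (a : Fin K → ℝ) (ha : ∀ k, 0 < a k)
    (d : Fin K → ℝ) (hd : ∀ k, 0 ≤ d k) (r : ℕ)
    (hr : (Finset.univ.filter fun k => d k ≠ 0).card = r) :
    (Matrix.vecMulVec a a + Matrix.diagonal d).rank = min K (r + 1) := by
  classical
  rw [Matrix.rank, finrank_range_eq_of_ker_eq (ker_mulVecLin_vecMulVec_add_diagonal a hd)]
  by_cases hfull : ∀ k, d k ≠ 0
  · have hrK : r = K := by
      rwa [Finset.filter_true_of_mem fun k _ => hfull k, Finset.card_univ, Fintype.card_fin,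
        eq_comm] at hr
    rw [finrank_range_dotProductProdRestrict_of_forall a hfull, Fintype.card_fin]
    omega
  · obtain ⟨k, hk⟩ := not_forall.mp hfull
    have hcard : Fintype.card {k // d k ≠ 0} = r := by
      convert hr using 1
      exact Fintype.card_subtype _
    have hrK : r < K := by simpa [hcard] using Fintype.card_subtype_lt (p := (d · ≠ 0)) hk
    rw [finrank_range_dotProductProdRestrict_eq_card_add_one a hk (ha k).ne', hcard]
    omega
end

section
/- Let u ∈ ℝ^K have strictly positive entries and let A be a diagonal positive semidefinite matrix with at least one zero diagonal entry. Then the column space of uu' + A equals the span of u together with the standard basis vectors e_k for which A_kk ≠ 0. -/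
open Matrix

lemma key_apply {K : ℕ} (u d x : Fin K → ℝ) :
    (Matrix.vecMulVec u u + Matrix.diagonal d).mulVecLin x
      = (u ⬝ᵥ x) • u + fun i => d i * x i := by
  funext i
  simp only [Matrix.mulVecLin_apply, Matrix.add_mulVec, Matrix.mulVec_diagonal,
    Pi.add_apply, Pi.smul_apply, smul_eq_mul]
  have : (Matrix.vecMulVec u u).mulVec x i = (u ⬝ᵥ x) * u i := by
    simp [Matrix.mulVec, Matrix.vecMulVec, dotProduct, Finset.sum_mul, Finset.mul_sum,
      mul_comm, mul_left_comm]
  rw [this]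

/-- If `u` has strictly positive entries and `A = diagonal d` is PSD with at least
one zero diagonal entry, then the column space of `u uᵀ + A` equals the span of `u` together
with the standard basis vectors `e k` for which `d k ≠ 0`. -/
theorem range_vecMulVec_add_diagonal {K : ℕ} (u : Fin K → ℝ) (hu : ∀ k, 0 < u k)
    (d : Fin K → ℝ) (hd : ∀ k, 0 ≤ d k) (hzero : ∃ k, d k = 0) :
    LinearMap.range (Matrix.vecMulVec u u + Matrix.diagonal d).mulVecLin
      = Submodule.span ℝ
          ({u} ∪ {x : Fin K → ℝ | ∃ k, d k ≠ 0 ∧ x = Pi.single k (1 : ℝ)}) := by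
  obtain ⟨k0, hk0⟩ := hzero
  apply le_antisymm
  · rintro _ ⟨x, rfl⟩
    rw [key_apply]
    refine Submodule.add_mem _ (Submodule.smul_mem _ _ (Submodule.subset_span (Or.inl rfl))) ?_
    have h : (fun i => d i * x i) = ∑ k, (d k * x k) • (Pi.single k 1 : Fin K → ℝ) := by
      funext i
      simp [Finset.sum_apply, Pi.single_apply, mul_comm]
    rw [h]
    refine Submodule.sum_mem _ fun k _ => ?_
    by_cases hdk : d k = 0
    · simp [hdk]
    · exact Submodule.smul_mem _ _ (Submodule.subset_span (Or.inr ⟨k, hdk, rfl⟩))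
  · rw [Submodule.span_le]
    rintro y (hy | ⟨k, hk, rfl⟩)
    · rw [Set.mem_singleton_iff] at hy
      obtain rfl := hy.symm
      refine ⟨(u k0)⁻¹ • (Pi.single k0 1 : Fin K → ℝ), ?_⟩
      rw [key_apply]
      have h1 : u ⬝ᵥ ((u k0)⁻¹ • (Pi.single k0 1 : Fin K → ℝ)) = 1 := by
        simp [dotProduct, Pi.single_apply, mul_comm]
        field_simp [(hu k0).ne']
      rw [h1]
      funext i
      by_cases hi : i = k0
      · subst hi; simp [hk0]
      · simp [Pi.single_apply, hi]
    · have hkk0 : k ≠ k0 := fun h => hk (h ▸ hk0)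
      refine ⟨(d k)⁻¹ • ((Pi.single k 1 : Fin K → ℝ) - (u k / u k0) • (Pi.single k0 1 : Fin K → ℝ)), ?_⟩
      rw [key_apply]
      have h1 : u ⬝ᵥ ((d k)⁻¹ • ((Pi.single k 1 : Fin K → ℝ) - (u k / u k0) • (Pi.single k0 1 : Fin K → ℝ))) = 0 := by
        simp [dotProduct, Pi.single_apply, Finset.sum_sub_distrib, mul_comm, mul_sub]
        field_simp [(hu k0).ne']
        ring
      rw [h1]
      funext i
      by_cases hi : i = k
      · subst hi
        simp [Pi.single_apply, hkk0, hk]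
      · by_cases hi0 : i = k0
        · subst hi0; simp [Pi.single_apply, hk0, Ne.symm hkk0, hi]
        · simp [Pi.single_apply, hi, hi0]
end

section
/- Consider a confidence interval of the form Z ± √2 Φ^{-1}(1−α/2) for (1/√2 + Π^{1/2})μ₁, where Z = m(U,V,Δ) + σ(Π)ξ with ξ ~ N(0,1) independent of (U,V,Δ,Π), σ(Π) > 0 on an event of positive probability. Then on the event A = {|ξ| > √2 Φ^{-1}(1−α/2)/σ(Π), σ(Π) > 0}, which has positive probability under every μ, the conditional coverage probability satisfies P(|Z − (1/√2+Π^{1/2})μ₁| ≤ √2 Φ^{-1}(1−α/2) | A) ≤ 1/2. -/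
/-! On `A` the noise `σ ξ` exceeds `w` in absolute value, so the intervals of radius `w` around
`m + σ ξ` and `m - σ ξ` are disjoint and at most one of them covers the target. As `ξ` is
symmetric and independent of `(M, Π)`, flipping its sign preserves the joint law and the event
`A`, so both intervals cover with the same conditional probability, which is therefore at most
`1/2`. That `P A > 0` follows from Fubini, since a nondegenerate Gaussian charges every tail
`{|x| > c}`. -/

open MeasureTheory ProbabilityTheory NNReal

lemma gaussianReal_pos_of_isOpen {μ : ℝ} {v : ℝ≥0} (hv : v ≠ 0) {s : Set ℝ} (hs : IsOpen s)
    (hne : s.Nonempty) : 0 < gaussianReal μ v s :=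
  pos_iff_ne_zero.2 fun h =>
    hs.measure_ne_zero volume hne (gaussianReal_absolutelyContinuous' μ hv h)

lemma lt_abs_sub_of_abs_add_le {a b w : ℝ} (hb : w < |b|) (hadd : |a + b| ≤ w) :
    w < |a - b| := by
  have : |(a + b) - (a - b)| ≤ |a + b| + |a - b| := abs_sub _ _
  rw [show (a + b) - (a - b) = 2 * b by ring, abs_mul, abs_two] at this
  linarith

lemma cond_le_half_of_disjoint {Ω : Type*} [MeasurableSpace Ω] {μ : Measure Ω}
    {s t u : Set Ω} (hs : MeasurableSet s) (hu : MeasurableSet u)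
    (hdisj : Disjoint (s ∩ t) (s ∩ u)) (heq : μ (s ∩ t) = μ (s ∩ u)) :
    μ[t | s] ≤ 1 / 2 := by
  have hcond_eq : μ[t | s] = μ[u | s] := by rw [cond_apply hs, cond_apply hs, heq]
  have hsum : μ[t | s] + μ[u | s] ≤ 1 := by
    rw [← cond_inter_self hs t, ← cond_inter_self hs u,
      ← measure_union hdisj (hs.inter hu)]
    exact prob_le_one
  rw [ENNReal.le_div_iff_mul_le (by norm_num) (by norm_num), mul_two]
  rwa [← hcond_eq] at hsum

lemma map_neg_eq_of_map_eq_gaussianReal {Ω : Type*} [MeasurableSpace Ω] {P : Measure Ω}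
    {ξ : Ω → ℝ} {v : ℝ≥0} (hξ : Measurable ξ) (hlaw : P.map ξ = gaussianReal 0 v) :
    P.map (fun ω => -ξ ω) = P.map ξ := by
  rw [show (fun ω => -ξ ω) = Neg.neg ∘ ξ from rfl, ← Measure.map_map measurable_neg hξ, hlaw,
    gaussianReal_map_neg, neg_zero]

section

variable {Ω β γ : Type*} [MeasurableSpace Ω] [MeasurableSpace β] [MeasurableSpace γ]
  {P : Measure Ω} [IsFiniteMeasure P] {Y : Ω → β}

lemma ProbabilityTheory.IndepFun.map_prodMk_eq_of_map_eq {ξ ξ' : Ω → γ} (hY : Measurable Y)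
    (hξ : Measurable ξ) (hξ' : Measurable ξ') (hind : IndepFun Y ξ P) (hind' : IndepFun Y ξ' P)
    (hlaw : P.map ξ' = P.map ξ) :
    P.map (fun ω => (Y ω, ξ' ω)) = P.map (fun ω => (Y ω, ξ ω)) := by
  rw [hind.map_prod_eq_prod_map_map hY.aemeasurable hξ.aemeasurable,
    hind'.map_prod_eq_prod_map_map hY.aemeasurable hξ'.aemeasurable, hlaw]

lemma ProbabilityTheory.IndepFun.measure_preimage_prodMk_pos {ξ : Ω → γ} (hY : Measurable Y)
    (hξ : Measurable ξ) (hind : IndepFun Y ξ P) {S : Set (β × γ)} (hS : MeasurableSet S)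
    {B : Set β} (hB : 0 < P (Y ⁻¹' B)) (hslice : ∀ y ∈ B, 0 < P.map ξ (Prod.mk y ⁻¹' S)) :
    0 < P ((fun ω => (Y ω, ξ ω)) ⁻¹' S) := by
  rw [← Measure.map_apply (hY.prodMk hξ) hS,
    hind.map_prod_eq_prod_map_map hY.aemeasurable hξ.aemeasurable, pos_iff_ne_zero, Ne,
    Measure.measure_prod_null hS]
  intro hnull
  have hB_null : P.map Y B = 0 :=
    measure_mono_null (fun y hy => (hslice y hy).ne') (ae_iff.1 hnull)
  exact hB.ne' (le_antisymm (hB_null ▸ Measure.le_map_apply hY.aemeasurable B) bot_le)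

variable {ξ : Ω → ℝ} {m σ : β → ℝ} {w : ℝ}

lemma measure_lt_abs_div_pos {μ : ℝ} {v : ℝ≥0} (hv : v ≠ 0) (hY : Measurable Y)
    (hξ : Measurable ξ) (hσ : Measurable σ) (hind : IndepFun Y ξ P)
    (hlaw : P.map ξ = gaussianReal μ v) (hpos : 0 < P {ω | 0 < σ (Y ω)}) :
    0 < P {ω | 0 < σ (Y ω) ∧ w / σ (Y ω) < |ξ ω|} := by
  refine hind.measure_preimage_prodMk_pos (S := {p | 0 < σ p.1 ∧ w / σ p.1 < |p.2|}) hY hξ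
    (by measurability) (B := {y | 0 < σ y}) hpos fun y (hy : 0 < σ y) => ?_
  have hslice : Prod.mk y ⁻¹' {p | 0 < σ p.1 ∧ w / σ p.1 < |p.2|} = {x | w / σ y < |x|} := by
    ext x
    simp [hy]
  rw [hslice, hlaw]
  exact gaussianReal_pos_of_isOpen hv (isOpen_lt continuous_const continuous_abs)
    ⟨w / σ y + 1, (lt_add_one (w / σ y)).trans_le (le_abs_self _)⟩

lemma cond_abs_add_mul_le_le_half (hY : Measurable Y) (hξ : Measurable ξ) (hm : Measurable m)
    (hσ : Measurable σ) (hind : IndepFun Y ξ P) (hsymm : P.map (fun ω => -ξ ω) = P.map ξ) :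
    P[{ω | |m (Y ω) + σ (Y ω) * ξ ω| ≤ w} | {ω | 0 < σ (Y ω) ∧ w / σ (Y ω) < |ξ ω|}] ≤ 1 / 2 := by
  set S : Set (β × ℝ) := {p | (0 < σ p.1 ∧ w / σ p.1 < |p.2|) ∧ |m p.1 + σ p.1 * p.2| ≤ w}
  have hS : MeasurableSet S := by measurability
  have hlaw : P.map (fun ω => (Y ω, -ξ ω)) = P.map (fun ω => (Y ω, ξ ω)) :=
    hind.map_prodMk_eq_of_map_eq hY hξ hξ.neg (hind.comp measurable_id measurable_neg) hsymm
  refine cond_le_half_of_disjoint (u := {ω | |m (Y ω) + σ (Y ω) * -ξ ω| ≤ w})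
    (by measurability) (by measurability) ?_ ?_
  · rw [Set.disjoint_left]
    rintro ω ⟨⟨hσω, hξω⟩, hcover⟩ ⟨-, hcover' : |m (Y ω) + σ (Y ω) * -ξ ω| ≤ w⟩
    rw [div_lt_iff₀ hσω, mul_comm, ← abs_of_pos hσω, ← abs_mul] at hξω
    rw [mul_neg, ← sub_eq_add_neg] at hcover'
    exact (lt_abs_sub_of_abs_add_le hξω hcover).not_ge hcover'
  · have hpre : {ω | 0 < σ (Y ω) ∧ w / σ (Y ω) < |ξ ω|} ∩ {ω | |m (Y ω) + σ (Y ω) * -ξ ω| ≤ w}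
        = (fun ω => (Y ω, -ξ ω)) ⁻¹' S := by
      ext ω
      simp [S, abs_neg]
    rw [hpre, ← Measure.map_apply (μ := P) (f := fun ω => (Y ω, -ξ ω)) (by fun_prop) hS, hlaw,
      Measure.map_apply (hY.prodMk hξ) hS]
    rfl

end

theorem recognizable_subset_undercoverage_general
    {Ω : Type*} [MeasurableSpace Ω] (P : Measure Ω) [IsProbabilityMeasure P]
    (M Pr ξ : Ω → ℝ)
    (hM : Measurable M) (hPr : Measurable Pr) (hξ : Measurable ξ)
    (hξlaw : Measure.map ξ P = gaussianReal 0 1)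
    (hindep : IndepFun ξ (fun ω => (M ω, Pr ω)) P)
    (σf : ℝ → ℝ) (hσf : Measurable σf)
    (hσpos : 0 < P {ω | 0 < σf (Pr ω)})
    (w : ℝ)
    (Z : Ω → ℝ) (hZ : Z = fun ω => M ω + σf (Pr ω) * ξ ω)
    (A : Set Ω) (hA : A = {ω | 0 < σf (Pr ω) ∧ w / σf (Pr ω) < |ξ ω|}) :
    0 < P A ∧
      ∀ μ₁ : ℝ,
        (ProbabilityTheory.cond P A)
            {ω | |Z ω - (1 / Real.sqrt 2 + Real.sqrt (Pr ω)) * μ₁| ≤ w}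
          ≤ 1 / 2 := by
  have hY : Measurable fun ω => (M ω, Pr ω) := hM.prodMk hPr
  have hσ : Measurable fun y : ℝ × ℝ => σf y.2 := by fun_prop
  subst hA
  refine ⟨measure_lt_abs_div_pos (Y := fun ω => (M ω, Pr ω)) (σ := fun y => σf y.2)
    one_ne_zero hY hξ hσ hindep.symm hξlaw hσpos, fun μ₁ => ?_⟩
  set m : ℝ × ℝ → ℝ := fun y => y.1 - (1 / Real.sqrt 2 + Real.sqrt y.2) * μ₁
  have hcover : {ω | |Z ω - (1 / Real.sqrt 2 + Real.sqrt (Pr ω)) * μ₁| ≤ w}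
      = {ω | |m (M ω, Pr ω) + σf (Pr ω) * ξ ω| ≤ w} := by
    ext ω
    simp only [hZ, m, add_sub_right_comm]
  rw [hcover]
  exact cond_abs_add_mul_le_le_half (Y := fun ω => (M ω, Pr ω)) (m := m) (σ := fun y => σf y.2)
    hY hξ (by fun_prop) hσ hindep.symm (map_neg_eq_of_map_eq_gaussianReal hξ hξlaw)

/-- recognizable subsets / failure of bet-proofness: if
`Z = m(U,V,Δ) + σ(Π)ξ` with `ξ ~ N(0,1)` independent of `(m(U,V,Δ), Π)` and `σ(Π) > 0` with
positive probability, then the event `A = {σ(Π) > 0, |ξ| > √2 Φ⁻¹(1−α/2)/σ(Π)}` has positive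
probability and, for every `μ₁`, the conditional coverage of the interval
`Z ± √2 Φ⁻¹(1−α/2)` for `(1/√2 + √Π)μ₁` given `A` is at most `1/2`. -/
theorem recognizable_subset_undercoverage
    {Ω : Type*} [MeasurableSpace Ω] (P : Measure Ω) [IsProbabilityMeasure P]
    (M Pr ξ : Ω → ℝ)
    (hM : Measurable M) (hPr : Measurable Pr) (hξ : Measurable ξ)
    (hξlaw : Measure.map ξ P = gaussianReal 0 1)
    (hindep : IndepFun ξ (fun ω => (M ω, Pr ω)) P)
    (σf : ℝ → ℝ) (hσf : Measurable σf)
    (hσpos : 0 < P {ω | 0 < σf (Pr ω)})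
    (α w : ℝ) (hα : α ∈ Set.Ioo (0 : ℝ) (1 / 2))
    (hw : ((gaussianReal 0 1 : Measure ℝ) (Set.Iic (w / Real.sqrt 2))).toReal = 1 - α / 2)
    (Z : Ω → ℝ) (hZ : Z = fun ω => M ω + σf (Pr ω) * ξ ω)
    (A : Set Ω) (hA : A = {ω | 0 < σf (Pr ω) ∧ w / σf (Pr ω) < |ξ ω|}) :
    0 < P A ∧
      ∀ μ₁ : ℝ,
        (ProbabilityTheory.cond P A)
            {ω | |Z ω - (1 / Real.sqrt 2 + Real.sqrt (Pr ω)) * μ₁| ≤ w}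
          ≤ 1 / 2 :=
  recognizable_subset_undercoverage_general P M Pr ξ hM hPr hξ hξlaw hindep σf hσf hσpos w Z hZ A hA
end

section
/- In the Thompson sampling Gaussian model, let W_{s−1} be the cumulative inverse-variance weighted means and suppose the map Q from posterior mean differences ∇_{s−1} = (W_{s−1,1} − W_{s−1,K}, ..., W_{s−1,K−1} − W_{s−1,K}) to assignment probabilities Π_s is a bijection. Then (Π_{2:s}, L_s), where L_s = Σ_{k} Σ_{t=1}^{s−1} (n_t Π_{tk}/(n σ_k²)) X_{tk}, determines (Π_{1:s}, W_{s−1}) via the identity W_{s−1,K} · Σ_{t=1}^{s−1} Σ_k n_tΠ_{tk}/(nσ_k²) = L_s − Σ_{k=1}^{K−1} (Σ_{t=1}^{s−1} n_tΠ_{tk}/(nσ_k²)) (W_{s−1,k} − W_{s−1,K}), and hence (Π_{2:s}, L_s) is sufficient for μ with respect to X_{1:s−1}. -/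
lemma thompson_aux (K m : ℕ) (klast : Fin K)
    (n : ℝ) (hn : 0 < n) (nt : ℕ → ℝ) (hnt : ∀ t, 0 < nt t)
    (σ2 : Fin K → ℝ) (hσ2 : ∀ k, 0 < σ2 k)
    (Pi : ℕ → Fin K → ℝ) (hPi : ∀ t k, 0 < Pi t k)
    (X : ℕ → Fin K → ℝ) (W : ℕ → Fin K → ℝ)
    (hW : ∀ t k, W t k = (∑ r ∈ Finset.range t, nt r * Pi r k * X r k)
        / (∑ r ∈ Finset.range t, nt r * Pi r k))
    (L : ℝ)
    (hL : L = ∑ k, ∑ t ∈ Finset.range m, nt t * Pi t k * X t k / (n * σ2 k)) :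
    W m klast * (∑ t ∈ Finset.range m, ∑ k, nt t * Pi t k / (n * σ2 k))
        = L - ∑ k ∈ Finset.univ.erase klast,
            (∑ t ∈ Finset.range m, nt t * Pi t k / (n * σ2 k)) * (W m k - W m klast) := by
  set c : Fin K → ℝ := fun k => ∑ t ∈ Finset.range m, nt t * Pi t k / (n * σ2 k) with hc
  have key : ∀ k, c k * W m k = ∑ t ∈ Finset.range m, nt t * Pi t k * X t k / (n * σ2 k) := by
    intro k
    rcases Nat.eq_zero_or_pos m with hm | hm
    · simp [hc, hm, hW]
    · have hD : 0 < ∑ r ∈ Finset.range m, nt r * Pi r k := by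
        apply Finset.sum_pos (fun r _ => mul_pos (hnt r) (hPi r k))
        simpa using hm.ne'
      have hck : c k = (∑ r ∈ Finset.range m, nt r * Pi r k) / (n * σ2 k) := by
        simp only [hc, ← Finset.sum_div]
      have hnσ : n * σ2 k ≠ 0 := (mul_pos hn (hσ2 k)).ne'
      rw [hck, hW, ← Finset.sum_div]
      field_simp
  have hLsum : L = ∑ k, c k * W m k := by
    rw [hL]; exact Finset.sum_congr rfl fun k _ => (key k).symm
  have hswap : (∑ t ∈ Finset.range m, ∑ k, nt t * Pi t k / (n * σ2 k)) = ∑ k, c k :=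
    Finset.sum_comm
  rw [hswap, hLsum]
  have he : ∑ k ∈ Finset.univ.erase klast, c k * (W m k - W m klast)
      = ∑ k, c k * (W m k - W m klast) := by
    apply Finset.sum_erase
    simp
  rw [he, Finset.mul_sum, ← Finset.sum_sub_distrib]
  apply Finset.sum_congr rfl
  intro k _
  ring



/-- in the Thompson sampling model, with `W` the cumulative weighted arm means
over the first `m` batches, `L` the leftover statistic, and the assignment probabilities
`Π_{t+1} = Q(∇_t)` an injective function of the differences `∇_t`, the identity
`W_K Σ_{t<m} Σ_k n_tΠ_{tk}/(nσ_k²) = L − Σ_{k≠K} (Σ_{t<m} n_tΠ_{tk}/(nσ_k²))(W_k − W_K)`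
holds, and `(Π_{2:s}, L)` determines `(Π_{1:s}, W)`: two data sets sharing `Π₁`, `Π_{2:s}`
and `L` have the same cumulative means `W`. -/
theorem thompson_reconstruction
    (K m : ℕ) (hK : 0 < K) (klast : Fin K) (hkl : (klast : ℕ) = K - 1)
    (n : ℝ) (hn : 0 < n) (nt : ℕ → ℝ) (hnt : ∀ t, 0 < nt t)
    (σ2 : Fin K → ℝ) (hσ2 : ∀ k, 0 < σ2 k)
    (Pi Pi' : ℕ → Fin K → ℝ) (hPi : ∀ t k, 0 < Pi t k) (hPi' : ∀ t k, 0 < Pi' t k)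
    (X X' : ℕ → Fin K → ℝ)
    (W W' : ℕ → Fin K → ℝ)
    (hW : ∀ t k, W t k = (∑ r ∈ Finset.range t, nt r * Pi r k * X r k)
        / (∑ r ∈ Finset.range t, nt r * Pi r k))
    (hW' : ∀ t k, W' t k = (∑ r ∈ Finset.range t, nt r * Pi' r k * X' r k)
        / (∑ r ∈ Finset.range t, nt r * Pi' r k))
    (L L' : ℝ)
    (hL : L = ∑ k, ∑ t ∈ Finset.range m, nt t * Pi t k * X t k / (n * σ2 k))
    (hL' : L' = ∑ k, ∑ t ∈ Finset.range m, nt t * Pi' t k * X' t k / (n * σ2 k))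
    (Qmap : (Fin K → ℝ) → (Fin K → ℝ)) (hQinj : Function.Injective Qmap)
    (hQ : ∀ t, 1 ≤ t → t ≤ m → Pi t = Qmap fun k => W t k - W t klast)
    (hQ' : ∀ t, 1 ≤ t → t ≤ m → Pi' t = Qmap fun k => W' t k - W' t klast)
    (hPi0 : Pi 0 = Pi' 0)
    (hPieq : ∀ t, 1 ≤ t → t ≤ m → Pi t = Pi' t)
    (hLeq : L = L') :
    W m klast * (∑ t ∈ Finset.range m, ∑ k, nt t * Pi t k / (n * σ2 k))
        = L - ∑ k ∈ Finset.univ.erase klast,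
            (∑ t ∈ Finset.range m, nt t * Pi t k / (n * σ2 k)) * (W m k - W m klast) ∧
      W m = W' m := by
  have hPiall : ∀ t ∈ Finset.range m, Pi t = Pi' t := by
    intro t ht
    rcases Nat.eq_zero_or_pos t with h0 | h1
    · subst h0; exact hPi0
    · exact hPieq t h1 (le_of_lt (Finset.mem_range.mp ht))
  have id1 := thompson_aux K m klast n hn nt hnt σ2 hσ2 Pi hPi X W hW L hL
  have id2 := thompson_aux K m klast n hn nt hnt σ2 hσ2 Pi' hPi' X' W' hW' L' hL'
  refine ⟨id1, ?_⟩
  rcases Nat.eq_zero_or_pos m with hm | hm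
  · subst hm
    funext k
    simp [hW, hW']
  -- differences agree
  have hdiff : ∀ k, W m k - W m klast = W' m k - W' m klast := by
    intro k
    have h := hQinj ((hQ m hm le_rfl).symm.trans ((hPieq m hm le_rfl).trans (hQ' m hm le_rfl)))
    exact congrFun h k
  -- coefficient sums agree
  have hcoef : ∀ k, (∑ t ∈ Finset.range m, nt t * Pi t k / (n * σ2 k))
      = ∑ t ∈ Finset.range m, nt t * Pi' t k / (n * σ2 k) := by
    intro k
    exact Finset.sum_congr rfl fun t ht => by rw [hPiall t ht]
  have hS : (∑ t ∈ Finset.range m, ∑ k, nt t * Pi t k / (n * σ2 k))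
      = ∑ t ∈ Finset.range m, ∑ k, nt t * Pi' t k / (n * σ2 k) :=
    Finset.sum_congr rfl fun t ht => Finset.sum_congr rfl fun k _ => by rw [hPiall t ht]
  have hSpos : 0 < ∑ t ∈ Finset.range m, ∑ k, nt t * Pi t k / (n * σ2 k) := by
    apply Finset.sum_pos
    · intro t _
      apply Finset.sum_pos
      · intro k _
        exact div_pos (mul_pos (hnt t) (hPi t k)) (mul_pos hn (hσ2 k))
      · exact Finset.univ_nonempty_iff.mpr ⟨klast⟩
    · simpa using hm.ne'
  have hE : (∑ k ∈ Finset.univ.erase klast,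
        (∑ t ∈ Finset.range m, nt t * Pi t k / (n * σ2 k)) * (W m k - W m klast))
      = ∑ k ∈ Finset.univ.erase klast,
        (∑ t ∈ Finset.range m, nt t * Pi' t k / (n * σ2 k)) * (W' m k - W' m klast) :=
    Finset.sum_congr rfl fun k _ => by rw [hcoef k, hdiff k]
  have hlast : W m klast = W' m klast := by
    have h1 : W m klast * (∑ t ∈ Finset.range m, ∑ k, nt t * Pi t k / (n * σ2 k))
        = W' m klast * (∑ t ∈ Finset.range m, ∑ k, nt t * Pi t k / (n * σ2 k)) := by
      rw [id1, hS, id2, hLeq, hE]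
    exact mul_right_cancel₀ hSpos.ne' h1
  funext k
  have := hdiff k
  linarith [hdiff k]
end

section
/- Suppose (Π_{2:T}, L) is sufficient for μ with respect to the law of X_{1:T−1} given T, and X_T given (X_{1:T−1}, T) has distribution depending on the past only through (Π_{2:T}, T). Then (L, X_T) is sufficient for μ with respect to the conditional law of X_{1:T} given (Π_{2:T}, T). -/
/-!
Write `W = (Π, L, T)`. Given `W`, the past `A` has the `θ`-free law `κ₁ W`, and the new batch `B`
depends on `(A, T)` only through `W`. Hence `A` and `B` are conditionally independent given `W`
(Tonelli in the two kernels), so the conditional law of `A` given `(W, B)` is still `κ₁ W`.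
Since `((L, B), (Π, T))` is a relabelling of `(W, B)` having `B` as a coordinate, the conditional
law of `(A, B)` given it is `κ₁ W ⊗ δ_B`.
-/

open MeasureTheory ProbabilityTheory
open scoped ENNReal

namespace ProbabilityTheory

namespace Kernel

variable {α β : Type*} [MeasurableSpace α] [MeasurableSpace β] [Nonempty β]

open scoped Classical in
/-- A hypothesis `condDistrib Y X μ (X ω) = κ (g ω)` only constrains `κ` where it is a probability
measure, so it survives this modification, after which Tonelli's theorem applies to `κ`. -/
noncomputable def toMarkov (κ : Kernel α β) : Kernel α β :=
  piecewise (κ.measurable_coe MeasurableSet.univ (measurableSet_singleton 1)) κ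
    (const α (Measure.dirac (Classical.arbitrary β)))

instance isMarkovKernel_toMarkov (κ : Kernel α β) : IsMarkovKernel κ.toMarkov := by
  classical
  refine ⟨fun a => ?_⟩
  rw [toMarkov, piecewise_apply]
  split_ifs with h
  · exact ⟨h⟩
  · rw [const_apply]
    infer_instance

lemma toMarkov_apply_of_measure_univ {κ : Kernel α β} {a : α} (h : κ a Set.univ = 1) :
    κ.toMarkov a = κ a := by
  classical
  rw [toMarkov, piecewise_apply, if_pos (show a ∈ _ from h)]

end Kernel

variable {Ω β γ E F : Type*} [MeasurableSpace Ω] [MeasurableSpace β] [MeasurableSpace γ]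
  [MeasurableSpace E] [StandardBorelSpace E] [Nonempty E]
  [MeasurableSpace F] [StandardBorelSpace F] [Nonempty F]
  {μ : Measure Ω} [IsFiniteMeasure μ]

lemma ae_condDistrib_eq_toMarkov {X : Ω → β} {Y : Ω → E} {κ : Kernel γ E} {g : Ω → γ}
    (h : ∀ᵐ ω ∂μ, condDistrib Y X μ (X ω) = κ (g ω)) :
    ∀ᵐ ω ∂μ, condDistrib Y X μ (X ω) = κ.toMarkov (g ω) := by
  filter_upwards [h] with ω hω
  rw [Kernel.toMarkov_apply_of_measure_univ (by rw [← hω, measure_univ]), hω]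

lemma ae_condDistrib_eq_iff_lintegral_eq {X : Ω → β} {Y : Ω → E} (hX : Measurable X)
    (hY : Measurable Y) (κ : Kernel β E) [IsFiniteKernel κ] :
    (∀ᵐ ω ∂μ, condDistrib Y X μ (X ω) = κ (X ω)) ↔
      ∀ f : β × E → ℝ≥0∞, Measurable f →
        ∫⁻ ω, f (X ω, Y ω) ∂μ = ∫⁻ ω, ∫⁻ y, f (X ω, y) ∂κ (X ω) ∂μ := by
  constructor
  · intro hκ f hf
    calc ∫⁻ ω, f (X ω, Y ω) ∂μ = ∫⁻ p, f p ∂(μ.map X ⊗ₘ condDistrib Y X μ) := by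
          rw [compProd_map_condDistrib hY.aemeasurable, lintegral_map hf (hX.prodMk hY)]
      _ = ∫⁻ ω, ∫⁻ y, f (X ω, y) ∂condDistrib Y X μ (X ω) ∂μ := by
          rw [Measure.lintegral_compProd hf, lintegral_map hf.lintegral_kernel_prod_right' hX]
      _ = ∫⁻ ω, ∫⁻ y, f (X ω, y) ∂κ (X ω) ∂μ :=
          lintegral_congr_ae (hκ.mono fun ω hω => by simp only [hω])
  · intro h
    refine ae_of_ae_map hX.aemeasurable <| condDistrib_ae_eq_of_measure_eq_compProd_of_measurable
      hX hY <| Measure.ext_of_lintegral _ fun f hf => ?_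
    rw [Measure.lintegral_compProd hf, lintegral_map hf (hX.prodMk hY), h f hf,
      lintegral_map hf.lintegral_kernel_prod_right' hX]

lemma ae_condDistrib_prodMk_eq_of_condIndep {V : Ω → γ} {Y : Ω → F} (hV : Measurable V)
    (hY : Measurable Y) {w : γ → β} {z : γ → E} (hw : Measurable w) (hz : Measurable z)
    (κ : Kernel β E) [IsFiniteKernel κ] (η : Kernel β F) [IsFiniteKernel η]
    (hκ : ∀ᵐ ω ∂μ, condDistrib (fun ω => z (V ω)) (fun ω => w (V ω)) μ (w (V ω)) = κ (w (V ω)))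
    (hη : ∀ᵐ ω ∂μ, condDistrib Y V μ (V ω) = η (w (V ω))) :
    ∀ᵐ ω ∂μ, condDistrib (fun ω => z (V ω)) (fun ω => (w (V ω), Y ω)) μ (w (V ω), Y ω)
      = κ (w (V ω)) := by
  have hwV : Measurable fun ω => w (V ω) := hw.comp hV
  replace hκ := (ae_condDistrib_eq_iff_lintegral_eq hwV (hz.comp hV) κ).mp hκ
  replace hη := (ae_condDistrib_eq_iff_lintegral_eq hV hY (η.comap w hw)).mp hη
  refine (ae_condDistrib_eq_iff_lintegral_eq (hwV.prodMk hY) (hz.comp hV)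
    (κ.comap Prod.fst measurable_fst)).mpr fun f hf => ?_
  calc ∫⁻ ω, f ((w (V ω), Y ω), z (V ω)) ∂μ
      = ∫⁻ ω, ∫⁻ y, f ((w (V ω), y), z (V ω)) ∂η (w (V ω)) ∂μ :=
        hη (fun p => f ((w p.1, p.2), z p.1)) (by fun_prop)
    _ = ∫⁻ ω, ∫⁻ e, ∫⁻ y, f ((w (V ω), y), e) ∂η (w (V ω)) ∂κ (w (V ω)) ∂μ :=
        hκ (fun p => ∫⁻ y, f ((p.1, y), p.2) ∂η p.1) <|
          Measurable.lintegral_kernel_prod_right' (κ := η.comap Prod.fst measurable_fst)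
            (f := fun q => f ((q.1.1, q.2), q.1.2)) (by fun_prop)
    _ = ∫⁻ ω, ∫⁻ y, ∫⁻ e, f ((w (V ω), y), e) ∂κ (w (V ω)) ∂η (w (V ω)) ∂μ :=
        lintegral_congr fun ω => lintegral_lintegral_swap (by fun_prop)
    _ = ∫⁻ ω, ∫⁻ e, f ((w (V ω), Y ω), e) ∂κ (w (V ω)) ∂μ :=
        (hη (fun p => ∫⁻ e, f ((w p.1, p.2), e) ∂κ (w p.1)) <|
          Measurable.lintegral_kernel_prod_right' (κ := κ.comap _ (hw.comp measurable_fst))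
            (f := fun q => f ((w q.1.1, q.1.2), q.2)) (by fun_prop)).symm

end ProbabilityTheory

/-- if `(Π_{2:T}, L)` (here `(π(A,T), L(A,T))`) is sufficient for `μ` (here the
parameter `θ`) with respect to the law of the past data `A = X_{1:T−1}` given `T`, and the
conditional law of the last batch `B = X_T` given `(A, T)` depends on the past only through
`(π(A,T), T)` (with a `θ`-free kernel), then `(L, X_T)` is sufficient for `θ` with respect to
the conditional law of `(A, B) = X_{1:T}` given `(Π_{2:T}, T)`: the conditional distribution
of the data given `((L, X_T), (Π_{2:T}, T))` admits a `θ`-free version `κ₃`. -/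
theorem sufficiency_composition
    {Ω 𝒜 ℬ PSp Θ : Type*}
    [MeasurableSpace Ω]
    [MeasurableSpace 𝒜] [StandardBorelSpace 𝒜] [Nonempty 𝒜]
    [MeasurableSpace ℬ] [StandardBorelSpace ℬ] [Nonempty ℬ]
    [MeasurableSpace PSp]
    (P : Θ → Measure Ω) (hP : ∀ θ, IsProbabilityMeasure (P θ))
    (A : Ω → 𝒜) (B : Ω → ℬ) (T : Ω → ℕ)
    (hA : Measurable A) (hB : Measurable B) (hT : Measurable T)
    (π : 𝒜 → ℕ → PSp) (L : 𝒜 → ℕ → ℝ)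
    (hπ : Measurable fun q : 𝒜 × ℕ => π q.1 q.2)
    (hL : Measurable fun q : 𝒜 × ℕ => L q.1 q.2)
    (κ₁ : Kernel (PSp × ℝ × ℕ) 𝒜)
    (hsuff : ∀ θ, haveI := hP θ; ∀ᵐ ω ∂P θ,
      condDistrib A (fun ω' => (π (A ω') (T ω'), L (A ω') (T ω'), T ω')) (P θ)
          (π (A ω) (T ω), L (A ω) (T ω), T ω)
        = κ₁ (π (A ω) (T ω), L (A ω) (T ω), T ω))
    (κ₂ : Kernel (PSp × ℕ) ℬ)
    (hcondB : ∀ θ, haveI := hP θ; ∀ᵐ ω ∂P θ,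
      condDistrib B (fun ω' => (A ω', T ω')) (P θ) (A ω, T ω)
        = κ₂ (π (A ω) (T ω), T ω)) :
    ∃ κ₃ : Kernel ((ℝ × ℬ) × PSp × ℕ) (𝒜 × ℬ),
      ∀ θ, haveI := hP θ; ∀ᵐ ω ∂P θ,
        condDistrib (fun ω' => (A ω', B ω'))
            (fun ω' => ((L (A ω') (T ω'), B ω'), (π (A ω') (T ω'), T ω'))) (P θ)
            ((L (A ω) (T ω), B ω), (π (A ω) (T ω), T ω))
          = κ₃ ((L (A ω) (T ω), B ω), (π (A ω) (T ω), T ω)) := by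
  have hW : Measurable fun v : 𝒜 × ℕ => (π v.1 v.2, L v.1 v.2, v.2) :=
    hπ.prodMk (hL.prodMk measurable_snd)
  have hS : Measurable fun ω => ((L (A ω) (T ω), B ω), (π (A ω) (T ω), T ω)) :=
    ((hL.comp (hA.prodMk hT)).prodMk hB).prodMk ((hπ.comp (hA.prodMk hT)).prodMk hT)
  let κ₃ : Kernel ((ℝ × ℬ) × PSp × ℕ) (𝒜 × ℬ) :=
    κ₁.toMarkov.comap (fun s => (s.2.1, s.1.1, s.2.2)) (by fun_prop) ×ₖ
      Kernel.deterministic (fun s => s.1.2) (by fun_prop)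
  refine ⟨κ₃, fun θ => ?_⟩
  have := hP θ
  have hindep := ae_condDistrib_prodMk_eq_of_condIndep (hA.prodMk hT) hB hW measurable_fst
    κ₁.toMarkov (κ₂.toMarkov.comap (fun x => (x.1, x.2.2)) (by fun_prop))
    (ae_condDistrib_eq_toMarkov (hsuff θ)) (ae_condDistrib_eq_toMarkov (hcondB θ))
  replace hindep := (ae_condDistrib_eq_iff_lintegral_eq ((hW.comp (hA.prodMk hT)).prodMk hB) hA
    (κ₁.toMarkov.comap Prod.fst measurable_fst)).mp hindep
  refine (ae_condDistrib_eq_iff_lintegral_eq hS (hA.prodMk hB) κ₃).mpr fun f hf => ?_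
  refine (hindep (fun p => f (((p.1.1.2.1, p.1.2), p.1.1.1, p.1.1.2.2), (p.2, p.1.2)))
    (by fun_prop)).trans (lintegral_congr fun ω => ?_)
  rw [Kernel.lintegral_prod_deterministic _ _ _ (by fun_prop)]
  rfl
end
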